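/- arXiv:2210.02247 — 3 statements merged into one kernel-verified Lean document; each statement's English description precedes it below -/
import Mathlib

section
/- Let R be a nonempty finite set (the risk set at a single event time), let η : R → ℝ be linear-predictor values, and let d ∈ R be the subject experiencing the event. Define g : ℝ → ℝ by g(α) = exp(α + η(d)) · exp(−∑_{j∈R} exp(α + η(j))) (the Poisson-likelihood contribution of this event time, with per-event-time intercept α). Then g attains its global maximum over ℝ at α* = −log(∑_{j∈R} exp(η(j))), this maximizer is unique, and the maximum value is g(α*) = e^{−1} · exp(η(d)) / ∑_{j∈R} exp(η(j)), i.e. e^{−1} times the Cox partial-likelihood factor for this event time. -/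
lemma te_le : ∀ t : ℝ, t * Real.exp (-t) ≤ Real.exp (-1) := by
  intro t
  have h := Real.add_one_le_exp (t - 1)
  have h2 : t ≤ Real.exp (t - 1) := by linarith
  have h3 : Real.exp (t - 1) = Real.exp t * Real.exp (-1) := by
    rw [← Real.exp_add]; ring_nf
  have hpos : 0 < Real.exp (-t) := Real.exp_pos _
  have : t * Real.exp (-t) ≤ Real.exp t * Real.exp (-1) * Real.exp (-t) := by
    nlinarith [h2, h3]
  calc t * Real.exp (-t) ≤ Real.exp t * Real.exp (-1) * Real.exp (-t) := this
    _ = Real.exp (-1) * (Real.exp t * Real.exp (-t)) := by ring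
    _ = Real.exp (-1) := by rw [← Real.exp_add]; simp

lemma te_eq (t : ℝ) (h : t * Real.exp (-t) = Real.exp (-1)) : t = 1 := by
  by_contra hne
  have h1 : t - 1 ≠ 0 := by intro h'; apply hne; linarith
  have h2 := Real.add_one_lt_exp h1
  have h3 : t < Real.exp (t - 1) := by linarith
  have h4 : Real.exp (t - 1) = Real.exp t * Real.exp (-1) := by
    rw [← Real.exp_add]; ring_nf
  have hpos : 0 < Real.exp (-t) := Real.exp_pos _
  have h5 : t * Real.exp (-t) < Real.exp t * Real.exp (-1) * Real.exp (-t) := by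
    nlinarith [h3, h4]
  have h6 : Real.exp t * Real.exp (-1) * Real.exp (-t)
      = Real.exp (-1) * (Real.exp t * Real.exp (-t)) := by ring
  rw [h6, ← Real.exp_add] at h5
  simp at h5
  rw [h] at h5
  exact lt_irrefl _ h5

/-- Poisson pseudodata representation of a single Cox event time: the
per-event-time intercept `α` profiles out, the maximizer is unique, and the
profiled value is `e⁻¹` times the Cox partial-likelihood factor. -/
theorem cox_poisson_single_event {ι : Type*} (R : Finset ι) (hR : R.Nonempty)
    (η : ι → ℝ) (d : ι) (hd : d ∈ R)
    (g : ℝ → ℝ)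
    (hg : ∀ α, g α = Real.exp (α + η d) * Real.exp (-(∑ j ∈ R, Real.exp (α + η j))))
    (αstar : ℝ) (hαstar : αstar = -Real.log (∑ j ∈ R, Real.exp (η j))) :
    (∀ α, g α ≤ g αstar) ∧
    (∀ α, g α = g αstar → α = αstar) ∧
    g αstar = Real.exp (-1) * Real.exp (η d) / (∑ j ∈ R, Real.exp (η j)) := by
  set S : ℝ := ∑ j ∈ R, Real.exp (η j) with hS
  have hSpos : 0 < S := Finset.sum_pos (fun j _ => Real.exp_pos _) hR
  have hsum : ∀ α : ℝ, (∑ j ∈ R, Real.exp (α + η j)) = Real.exp α * S := by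
    intro α
    rw [hS, Finset.mul_sum]
    exact Finset.sum_congr rfl fun j _ => by rw [Real.exp_add]
  have hestar : Real.exp αstar = 1 / S := by
    rw [hαstar, Real.exp_neg, Real.exp_log hSpos, one_div]
  have key : ∀ α : ℝ, g α = (Real.exp (η d) / S) * ((S * Real.exp α) * Real.exp (-(S * Real.exp α))) := by
    intro α
    rw [hg α, hsum α, Real.exp_add]
    field_simp
  have hstar : g αstar = (Real.exp (η d) / S) * Real.exp (-1) := by
    rw [key αstar, hestar]
    have : S * (1 / S) = 1 := by field_simp
    rw [this, one_mul]
  have hcpos : 0 < Real.exp (η d) / S := div_pos (Real.exp_pos _) hSpos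
  refine ⟨fun α => ?_, fun α hα => ?_, ?_⟩
  · rw [key α, hstar]
    exact mul_le_mul_of_nonneg_left (te_le _) hcpos.le
  · rw [key α, hstar] at hα
    have h1 : (S * Real.exp α) * Real.exp (-(S * Real.exp α)) = Real.exp (-1) :=
      mul_left_cancel₀ (ne_of_gt hcpos) hα
    have h2 : S * Real.exp α = 1 := te_eq _ h1
    have h3 : Real.exp α = 1 / S := by field_simp at h2 ⊢; linarith
    have := h3.trans hestar.symm
    exact Real.exp_injective this
  · rw [hstar]; ring
end

section
/- Let I be a nonempty finite set indexing distinct event times, and for each i ∈ I let R(i) be a nonempty finite risk set, η_i : R(i) → ℝ the linear-predictor values, and d(i) ∈ R(i) the subject experiencing the event at time i. For α : I → ℝ define the Poisson pseudodata likelihood P(α) = ∏_{i∈I} ∏_{j∈R(i)} μ_{ij}^{y_{ij}} e^{−μ_{ij}}, where μ_{ij} = exp(α(i) + η_i(j)) and y_{ij} = 1 if j = d(i) and 0 otherwise. Then the supremum of P over all α : I → ℝ is attained at α*(i) = −log(∑_{j∈R(i)} exp(η_i(j))), and sup_α P(α) = e^{−|I|} · ∏_{i∈I} exp(η_i(d(i)))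 / ∑_{j∈R(i)} exp(η_i(j)). In particular, the profiled Poisson likelihood equals the Cox partial likelihood up to the constant of proportionality e^{−|I|}. -/
lemma cox_key (a S : ℝ) (hS : 0 < S) :
    a - Real.exp a * S ≤ -Real.log S - 1 := by
  have ht : 0 < Real.exp a * S := mul_pos (Real.exp_pos a) hS
  have h := Real.log_le_sub_one_of_pos ht
  rw [Real.log_mul (Real.exp_pos a).ne' hS.ne', Real.log_exp] at h
  linarith

/-- Profiling the per-event-time intercepts out of the Poisson pseudodata
likelihood of the Cox model yields exactly `e^{-|I|}` times the Cox partial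
likelihood, with the supremum attained at `α*`. -/
theorem cox_poisson_profile {ι κ : Type*} [DecidableEq κ] (I : Finset ι) (hI : I.Nonempty)
    (R : ι → Finset κ) (hR : ∀ i ∈ I, (R i).Nonempty)
    (η : ι → κ → ℝ) (d : ι → κ) (hd : ∀ i ∈ I, d i ∈ R i)
    (y : ι → κ → ℕ) (hy : ∀ i j, y i j = if j = d i then 1 else 0)
    (μ : (ι → ℝ) → ι → κ → ℝ)
    (hμ : ∀ α i j, μ α i j = Real.exp (α i + η i j))
    (P : (ι → ℝ) → ℝ)
    (hP : ∀ α, P α = ∏ i ∈ I, ∏ j ∈ R i, (μ α i j) ^ (y i j) * Real.exp (-(μ α i j)))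
    (αstar : ι → ℝ)
    (hαstar : ∀ i, αstar i = -Real.log (∑ j ∈ R i, Real.exp (η i j))) :
    (∀ α, P α ≤ P αstar) ∧
    P αstar = Real.exp (-(I.card : ℝ)) *
      ∏ i ∈ I, Real.exp (η i (d i)) / (∑ j ∈ R i, Real.exp (η i j)) := by
  set S : ι → ℝ := fun i => ∑ j ∈ R i, Real.exp (η i j) with hSdef
  have hSpos : ∀ i ∈ I, 0 < S i := fun i hi =>
    Finset.sum_pos (fun j _ => Real.exp_pos _) (hR i hi)
  -- rewrite P as exp of a sum
  have hPform : ∀ α, P α =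
      Real.exp (∑ i ∈ I, (α i + η i (d i) - Real.exp (α i) * S i)) := by
    intro α
    rw [hP, Real.exp_sum]
    refine Finset.prod_congr rfl (fun i hi => ?_)
    have h1 : ∀ j ∈ R i, (μ α i j) ^ (y i j) * Real.exp (-(μ α i j))
        = Real.exp ((y i j : ℝ) * (α i + η i j) - Real.exp (α i + η i j)) := by
      intro j _
      rw [hμ, Real.exp_sub, ← Real.exp_nat_mul, Real.exp_neg]
      ring
    rw [Finset.prod_congr rfl h1, ← Real.exp_sum]
    congr 1
    rw [Finset.sum_sub_distrib]
    congr 1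
    · have : ∀ j ∈ R i, (y i j : ℝ) * (α i + η i j)
          = if j = d i then (α i + η i j) else 0 := by
        intro j _
        rw [hy]
        split <;> simp
      rw [Finset.sum_congr rfl this, Finset.sum_ite_eq' (R i) (d i)
        (fun j => α i + η i j), if_pos (hd i hi)]
    · simp only [Real.exp_add]
      rw [← Finset.mul_sum]
  -- value of each summand at αstar
  have hstarval : ∀ i ∈ I,
      αstar i + η i (d i) - Real.exp (αstar i) * S i
        = η i (d i) - Real.log (S i) - 1 := by
    intro i hi
    rw [hαstar]
    have : Real.exp (-Real.log (S i)) * S i = 1 := by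
      rw [Real.exp_neg, Real.exp_log (hSpos i hi), inv_mul_cancel₀ (hSpos i hi).ne']
    rw [this]; ring
  constructor
  · intro α
    rw [hPform, hPform]
    apply Real.exp_le_exp.mpr
    refine Finset.sum_le_sum (fun i hi => ?_)
    rw [hstarval i hi]
    have := cox_key (α i) (S i) (hSpos i hi)
    linarith
  · rw [hPform, Finset.sum_congr rfl hstarval]
    have : ∑ i ∈ I, (η i (d i) - Real.log (S i) - 1)
        = (∑ i ∈ I, (η i (d i) - Real.log (S i))) + (-(I.card : ℝ)) := by
      rw [Finset.sum_sub_distrib]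
      simp [mul_comm]
      ring
    rw [this, Real.exp_add, mul_comm, Real.exp_sum]
    congr 1
    refine Finset.prod_congr rfl (fun i hi => ?_)
    rw [Real.exp_sub, Real.exp_log (hSpos i hi)]
end

section
/- Let X be a real n×p matrix such that XᵀX is positive definite, let S be a symmetric positive semidefinite p×p real matrix, and let y ∈ ℝ^n. For every λ > 0 the matrix XᵀX + λS is positive definite, hence invertible; define β̂(λ) = (XᵀX + λS)⁻¹ Xᵀ y, the minimizer of ‖y − Xβ‖² + λ·βᵀSβ. Then, as λ → ∞, β̂(λ) converges to the unique minimizer of β ↦ ‖y − Xβ‖² over the subspace {β ∈ ℝ^p : Sβ = 0} (the null space of the penalty), this constrained minimizer being unique because XᵀX is positive definite. -/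
open Matrix Filter

/-!
The penalized estimator solves the normal equations `Xᵀ(y - Xβ̂) = λSβ̂`. The constrained
minimizer `β₀` solves the Lagrange system `Sβ₀ = 0`, `Xᵀ(y - Xβ₀) = Sw`, which is solvable
because the range of the symmetric matrix `S` is the orthogonal complement of its kernel.
Subtracting, `e = β̂(λ) - β₀` satisfies `XᵀXe + λSe = Sw`; pairing with `e` and using
`(λe - w)ᵀS(λe - w) ≥ 0` gives `2λ‖Xe‖² ≤ wᵀSw`. Hence `Xe → 0`, and `e → 0` because `X` is
injective.
-/

variable {ι κ : Type*} [Fintype ι] [Fintype κ]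

namespace Matrix

theorem PosDef.exists_mem_forall_dotProduct_mulVec_eq {A : Matrix ι ι ℝ} (hA : A.PosDef)
    (K : Submodule ℝ (ι → ℝ)) (b : ι → ℝ) :
    ∃ u ∈ K, ∀ k ∈ K, k ⬝ᵥ (A *ᵥ u) = k ⬝ᵥ b := by
  let Φ : K →ₗ[ℝ] Module.Dual ℝ K :=
    ((dotProductBilin ℝ ℝ).compl₂ A.mulVecLin).flip.domRestrict₁₂ K K
  have hΦ : LinearMap.ker Φ = ⊥ := by
    refine LinearMap.ker_eq_bot'.mpr fun u hu => ?_
    by_contra hne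
    have hpos := hA.dotProduct_mulVec_pos (x := (u : ι → ℝ)) (by simpa using hne)
    have hzero : (u : ι → ℝ) ⬝ᵥ (A *ᵥ u) = 0 := LinearMap.congr_fun hu u
    simp [hzero] at hpos
  obtain ⟨u, hu⟩ := (LinearMap.injective_iff_surjective_of_finrank_eq_finrank
    Subspace.dual_finrank_eq.symm).mp (LinearMap.ker_eq_bot.mp hΦ)
    ((dotProductBilin ℝ ℝ).flip b ∘ₗ K.subtype)
  exact ⟨u, u.2, fun k hk => LinearMap.congr_fun hu ⟨k, hk⟩⟩

theorem IsHermitian.exists_mulVec_eq_of_forall_dotProduct_eq_zero {S : Matrix ι ι ℝ}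
    (hS : S.IsHermitian) {v : ι → ℝ} (hv : ∀ k, S *ᵥ k = 0 → k ⬝ᵥ v = 0) :
    ∃ w, S *ᵥ w = v := by
  classical
  have hrange : WithLp.toLp 2 v ∈ LinearMap.range S.toEuclideanLin := by
    rw [← Submodule.orthogonal_orthogonal (LinearMap.range _),
      (isSymmetric_toEuclideanLin_iff.mpr hS).orthogonal_range]
    intro k hk
    simpa [EuclideanSpace.inner_eq_star_dotProduct, dotProduct_comm] using
      hv k.ofLp (congrArg WithLp.ofLp hk)
  obtain ⟨w, hw⟩ := hrange
  exact ⟨w.ofLp, congrArg WithLp.ofLp hw⟩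

theorem exists_mulVec_eq_zero_and_add_mulVec_eq {A S : Matrix ι ι ℝ} (hA : A.PosDef)
    (hS : S.IsHermitian) (b : ι → ℝ) :
    ∃ u w, S *ᵥ u = 0 ∧ A *ᵥ u + S *ᵥ w = b := by
  obtain ⟨u, hu, hAu⟩ :=
    hA.exists_mem_forall_dotProduct_mulVec_eq (LinearMap.ker S.mulVecLin) b
  obtain ⟨w, hw⟩ := hS.exists_mulVec_eq_of_forall_dotProduct_eq_zero (v := b - A *ᵥ u)
    fun k hk => by rw [dotProduct_sub, hAu k hk, sub_self]
  exact ⟨u, w, hu, by rw [hw, add_sub_cancel]⟩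

theorem IsHermitian.dotProduct_mulVec_comm {S : Matrix ι ι ℝ} (hS : S.IsHermitian)
    (u v : ι → ℝ) : u ⬝ᵥ (S *ᵥ v) = v ⬝ᵥ (S *ᵥ u) := by
  rw [dotProduct_mulVec, ← mulVec_transpose, (isHermitian_iff_isSymm.mp hS).eq, dotProduct_comm]

theorem IsHermitian.add_dotProduct_mulVec_add {S : Matrix ι ι ℝ} (hS : S.IsHermitian)
    (u v : ι → ℝ) :
    (u + v) ⬝ᵥ (S *ᵥ (u + v)) =
      u ⬝ᵥ (S *ᵥ u) + 2 * (v ⬝ᵥ (S *ᵥ u)) + v ⬝ᵥ (S *ᵥ v) := by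
  rw [mulVec_add, dotProduct_add, add_dotProduct, add_dotProduct, hS.dotProduct_mulVec_comm u v]
  ring

theorem mulVec_injective_of_posDef_transpose_mul_self {X : Matrix κ ι ℝ}
    (hX : (Xᵀ * X).PosDef) : Function.Injective X.mulVec := by
  classical
  intro u v huv
  apply mulVec_injective_of_isUnit hX.isUnit
  simp only [← mulVec_mulVec, huv]

end Matrix

theorem norm_le_sqrt_dotProduct_self (v : ι → ℝ) : ‖v‖ ≤ √(v ⬝ᵥ v) := by
  refine (pi_norm_le_iff_of_nonneg (Real.sqrt_nonneg _)).mpr fun i => ?_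
  rw [Real.norm_eq_abs, ← Real.sqrt_sq_eq_abs, sq]
  exact Real.sqrt_le_sqrt
    (Finset.single_le_sum (fun j _ => mul_self_nonneg (v j)) (Finset.mem_univ i))

theorem tendsto_of_mul_dotProduct_mulVec_sub_le {X : Matrix κ ι ℝ}
    (hX : Function.Injective X.mulVec) {f : ℝ → ι → ℝ} {a : ι → ℝ} {C : ℝ}
    (h : ∀ᶠ t in atTop, t * ((X *ᵥ (f t - a)) ⬝ᵥ (X *ᵥ (f t - a))) ≤ C) :
    Tendsto f atTop (nhds a) := by
  rw [← tendsto_sub_nhds_zero_iff, (X.mulVecLin.isClosedEmbedding_of_injective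
    (LinearMap.ker_eq_bot.mpr hX)).tendsto_nhds_iff]
  simp only [Function.comp_def, mulVecLin_apply, map_zero]
  have hbound : Tendsto (fun t => √(C / t)) atTop (nhds 0) := by
    simpa using ((tendsto_const_nhds (x := C)).div_atTop tendsto_id).sqrt
  refine squeeze_zero_norm' ?_ hbound
  filter_upwards [h, eventually_gt_atTop 0] with t ht htpos
  refine (norm_le_sqrt_dotProduct_self _).trans (Real.sqrt_le_sqrt (y := C / t) ?_)
  rw [le_div_iff₀ htpos, mul_comm]
  exact ht

section LeastSquares

variable (X : Matrix κ ι ℝ) (y : κ → ℝ) {S : Matrix ι ι ℝ}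

theorem sum_sq_sub_mulVec_add (β d : ι → ℝ) :
    ∑ i, (y i - (X *ᵥ (β + d)) i) ^ 2 =
      ∑ i, (y i - (X *ᵥ β) i) ^ 2 - 2 * (d ⬝ᵥ (Xᵀ *ᵥ (y - X *ᵥ β))) +
        (X *ᵥ d) ⬝ᵥ (X *ᵥ d) := by
  rw [dotProduct_mulVec, vecMul_transpose]
  simp only [dotProduct, mulVec_add, Pi.add_apply, Pi.sub_apply, Finset.mul_sum,
    ← Finset.sum_sub_distrib, ← Finset.sum_add_distrib]
  exact Finset.sum_congr rfl fun i _ => by ring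

theorem transpose_mulVec_sub_mulVec (β : ι → ℝ) :
    Xᵀ *ᵥ (y - X *ᵥ β) = Xᵀ *ᵥ y - (Xᵀ * X) *ᵥ β := by
  rw [mulVec_sub, mulVec_mulVec]

theorem transpose_mulVec_sub_eq_smul_of_mulVec_eq {lam : ℝ} {β : ι → ℝ}
    (h : (Xᵀ * X + lam • S) *ᵥ β = Xᵀ *ᵥ y) : Xᵀ *ᵥ (y - X *ᵥ β) = lam • (S *ᵥ β) := by
  rw [transpose_mulVec_sub_mulVec, ← h, add_mulVec, smul_mulVec, add_sub_cancel_left]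

theorem sum_sq_sub_mulVec_add_mul_le_of_normal_eq (hS : S.PosSemidef) {lam : ℝ}
    (hlam : 0 ≤ lam) {βhat : ι → ℝ} (hβhat : Xᵀ *ᵥ (y - X *ᵥ βhat) = lam • (S *ᵥ βhat))
    (β : ι → ℝ) :
    ∑ i, (y i - (X *ᵥ βhat) i) ^ 2 + lam * (βhat ⬝ᵥ (S *ᵥ βhat)) ≤
      ∑ i, (y i - (X *ᵥ β) i) ^ 2 + lam * (β ⬝ᵥ (S *ᵥ β)) := by
  obtain ⟨d, rfl⟩ : ∃ d, β = βhat + d := ⟨β - βhat, by abel⟩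
  rw [sum_sq_sub_mulVec_add, hS.isHermitian.add_dotProduct_mulVec_add, hβhat, dotProduct_smul,
    smul_eq_mul]
  have hXd : 0 ≤ (X *ᵥ d) ⬝ᵥ (X *ᵥ d) := dotProduct_star_self_nonneg _
  have hSd : 0 ≤ d ⬝ᵥ (S *ᵥ d) := hS.dotProduct_mulVec_nonneg d
  nlinarith [mul_nonneg hlam hSd]

theorem sum_sq_sub_mulVec_eq_add_of_mulVec_eq_zero (hS : S.IsHermitian) {β₀ w : ι → ℝ}
    (hβ₀ : S *ᵥ β₀ = 0) (hw : Xᵀ *ᵥ (y - X *ᵥ β₀) = S *ᵥ w) {β : ι → ℝ}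
    (hβ : S *ᵥ β = 0) :
    ∑ i, (y i - (X *ᵥ β) i) ^ 2 =
      ∑ i, (y i - (X *ᵥ β₀) i) ^ 2 + (X *ᵥ (β - β₀)) ⬝ᵥ (X *ᵥ (β - β₀)) := by
  obtain ⟨d, rfl⟩ : ∃ d, β = β₀ + d := ⟨β - β₀, by abel⟩
  have hd : S *ᵥ d = 0 := by rwa [mulVec_add, hβ₀, zero_add] at hβ
  rw [sum_sq_sub_mulVec_add, hw, hS.dotProduct_mulVec_comm, hd, dotProduct_zero,
    add_sub_cancel_left]
  ring

theorem two_mul_mul_dotProduct_self_le (hS : S.PosSemidef) {lam : ℝ} (hlam : 0 ≤ lam)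
    {βhat β₀ w : ι → ℝ} (hβhat : Xᵀ *ᵥ (y - X *ᵥ βhat) = lam • (S *ᵥ βhat))
    (hβ₀ : S *ᵥ β₀ = 0) (hw : Xᵀ *ᵥ (y - X *ᵥ β₀) = S *ᵥ w) :
    2 * lam * ((X *ᵥ (βhat - β₀)) ⬝ᵥ (X *ᵥ (βhat - β₀))) ≤ w ⬝ᵥ (S *ᵥ w) := by
  set e := βhat - β₀
  have hgrad : Xᵀ *ᵥ (X *ᵥ e) + lam • (S *ᵥ e) = S *ᵥ w := by
    rw [mulVec_sub] at hβhat hw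
    rw [mulVec_sub, mulVec_sub, mulVec_sub, hβ₀, sub_zero]
    linear_combination (norm := module) hw - hβhat
  have hsplit : (X *ᵥ e) ⬝ᵥ (X *ᵥ e) + lam * (e ⬝ᵥ (S *ᵥ e)) = e ⬝ᵥ (S *ᵥ w) := by
    rw [← hgrad, dotProduct_add, dotProduct_smul, smul_eq_mul, dotProduct_mulVec e Xᵀ,
      vecMul_transpose, dotProduct_comm]
  have hpsd : 0 ≤ (lam • e - w) ⬝ᵥ (S *ᵥ (lam • e - w)) := hS.dotProduct_mulVec_nonneg _
  simp only [mulVec_sub, mulVec_smul, dotProduct_sub, sub_dotProduct, smul_dotProduct,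
    dotProduct_smul, smul_eq_mul, hS.isHermitian.dotProduct_mulVec_comm w e] at hpsd
  have hSe : 0 ≤ e ⬝ᵥ (S *ᵥ e) := hS.dotProduct_mulVec_nonneg e
  nlinarith [mul_nonneg (sq_nonneg lam) hSe]

end LeastSquares

/-- As the smoothing parameter `λ → ∞`, the penalized least squares estimator
`β̂(λ) = (XᵀX + λS)⁻¹Xᵀy` (the minimizer of `‖y - Xβ‖² + λ βᵀSβ`) converges to
the unique minimizer of `‖y - Xβ‖²` over the null space `{β : Sβ = 0}` of the
penalty; moreover `XᵀX + λS` is positive definite for every `λ > 0`. -/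
theorem ridge_limit_null_space {n p : ℕ}
    (X : Matrix (Fin n) (Fin p) ℝ) (y : Fin n → ℝ)
    (hX : (Xᵀ * X).PosDef)
    (S : Matrix (Fin p) (Fin p) ℝ) (hS : S.PosSemidef)
    (βhat : ℝ → (Fin p → ℝ))
    (hβhat : ∀ lam : ℝ, βhat lam = (Xᵀ * X + lam • S)⁻¹.mulVec (Xᵀ.mulVec y)) :
    (∀ lam > (0 : ℝ), (Xᵀ * X + lam • S).PosDef) ∧
    (∀ lam > (0 : ℝ), ∀ β : Fin p → ℝ,
      (∑ i, (y i - X.mulVec (βhat lam) i) ^ 2) + lam * (βhat lam ⬝ᵥ S.mulVec (βhat lam)) ≤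
        (∑ i, (y i - X.mulVec β i) ^ 2) + lam * (β ⬝ᵥ S.mulVec β)) ∧
    ∃ β₀ : Fin p → ℝ, S.mulVec β₀ = 0 ∧
      (∀ β, S.mulVec β = 0 →
        ∑ i, (y i - X.mulVec β₀ i) ^ 2 ≤ ∑ i, (y i - X.mulVec β i) ^ 2) ∧
      (∀ β, S.mulVec β = 0 →
        (∀ β', S.mulVec β' = 0 →
          ∑ i, (y i - X.mulVec β i) ^ 2 ≤ ∑ i, (y i - X.mulVec β' i) ^ 2) →
        β = β₀) ∧
      Tendsto βhat atTop (nhds β₀) := by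
  have hpos : ∀ lam > (0 : ℝ), (Xᵀ * X + lam • S).PosDef :=
    fun lam hlam => hX.add_posSemidef (hS.smul hlam.le)
  have hnormal : ∀ lam > (0 : ℝ), Xᵀ *ᵥ (y - X *ᵥ βhat lam) = lam • (S *ᵥ βhat lam) :=
    fun lam hlam => transpose_mulVec_sub_eq_smul_of_mulVec_eq X y <| by
      rw [hβhat, mulVec_mulVec, mul_nonsing_inv _
        ((isUnit_iff_isUnit_det _).mp (hpos lam hlam).isUnit), one_mulVec]
  obtain ⟨β₀, w, hβ₀, hw⟩ :=
    exists_mulVec_eq_zero_and_add_mulVec_eq hX hS.isHermitian (Xᵀ *ᵥ y)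
  replace hw : Xᵀ *ᵥ (y - X *ᵥ β₀) = S *ᵥ w := by
    rw [transpose_mulVec_sub_mulVec, ← hw, add_sub_cancel_left]
  have hinj := mulVec_injective_of_posDef_transpose_mul_self hX
  have hrss := fun β (hβ : S *ᵥ β = 0) =>
    sum_sq_sub_mulVec_eq_add_of_mulVec_eq_zero X y hS.isHermitian hβ₀ hw hβ
  refine ⟨hpos, fun lam hlam => sum_sq_sub_mulVec_add_mul_le_of_normal_eq X y hS hlam.le
    (hnormal lam hlam), β₀, hβ₀, fun β hβ => ?_, fun β hβ hβmin => ?_, ?_⟩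
  · rw [hrss β hβ]
    exact le_add_of_nonneg_right (dotProduct_star_self_nonneg _)
  · have hXβ : (X *ᵥ (β - β₀)) ⬝ᵥ (X *ᵥ (β - β₀)) ≤ 0 := by
      linarith [hrss β hβ, hβmin β₀ hβ₀]
    replace hXβ := hXβ.antisymm (dotProduct_star_self_nonneg _)
    rw [dotProduct_self_eq_zero, mulVec_sub, sub_eq_zero] at hXβ
    exact hinj hXβ
  · refine tendsto_of_mul_dotProduct_mulVec_sub_le hinj (C := w ⬝ᵥ (S *ᵥ w) / 2) ?_
    filter_upwards [eventually_gt_atTop 0] with lam hlam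
    linarith [two_mul_mul_dotProduct_self_le X y hS hlam.le (hnormal lam hlam) hβ₀ hw]
end
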